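/- Pohozaev-type equipartition: if Q ∈ C²(ℝ^N) ∩ Ḣ¹ solves ΔQ + |Q|^{4/(N-2)}Q = 0 with the decay bounds |∂^α Q(x)| ≤ C_α |x|^{2-N-|α|} for |x| ≥ 1 and |α| ≤ 2, then for each 1 ≤ j ≤ N, ∫|∂_{x_j}Q|² dx = (1/N)∫|∇Q|² dx. -/

import Mathlib

/-!
For `F' = f`, the stress tensor `T i j = ∂ᵢQ ∂ⱼQ - δᵢⱼ (|∇Q|² / 2 - F Q)` of a solution of
`ΔQ + f Q = 0` is divergence free, so the Pohozaev field `Vᵢ = xⱼ T i j` has divergence `T j j`.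
The field `xⱼ T i j - xₖ T i k` thus has divergence `(∂ⱼQ)² - (∂ₖQ)²`, and it decays like
`‖x‖ ^ (3 - 2N)`, faster than the area `R ^ (N - 1)` of the boundary of the cube `[-R, R]ᴺ`
grows. The divergence theorem on growing cubes then gives `∫ (∂ⱼQ)² = ∫ (∂ₖQ)²` for all `j, k`,
and summing over `k` gives the claim.
-/

open MeasureTheory Filter Topology Set

section
variable {E : Type*} [NormedAddCommGroup E] [NormedSpace ℝ E] {Q : E → ℝ}

lemma fderiv_fderiv_apply_comm (hQ : ContDiff ℝ 2 Q) (x v w : E) :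
    fderiv ℝ (fun y => fderiv ℝ Q y v) x w = fderiv ℝ (fun y => fderiv ℝ Q y w) x v := by
  have hD : DifferentiableAt ℝ (fderiv ℝ Q) x :=
    (hQ.fderiv_right (m := 1) le_rfl).differentiable one_ne_zero x
  simpa [fderiv_clm_apply hD (differentiableAt_const _)] using
    hQ.contDiffAt.isSymmSndFDerivAt (by simp) w v

lemma differentiable_fderiv_apply (hQ : ContDiff ℝ 2 Q) (v : E) :
    Differentiable ℝ fun y => fderiv ℝ Q y v :=
  ((hQ.fderiv_right (m := 1) le_rfl).clm_apply contDiff_const).differentiable one_ne_zero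

end

lemma integrable_sq_of_integrable_sum_sq {X ι : Type*} [MeasurableSpace X] {μ : Measure X}
    [Fintype ι] {g : ι → X → ℝ} (hg : ∀ k, AEStronglyMeasurable (g k) μ)
    (h : Integrable (fun x => ∑ k, g k x ^ 2) μ) (k : ι) :
    Integrable (fun x => g k x ^ 2) μ :=
  h.mono' ((hg k).pow 2) (Eventually.of_forall fun x => by
    simpa using Finset.single_le_sum (fun i _ => sq_nonneg (g i x)) (Finset.mem_univ k))

section
variable {N : ℕ}

noncomputable def stressTensor (F : ℝ → ℝ) (Q : (Fin N → ℝ) → ℝ) (i j : Fin N)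
    (x : Fin N → ℝ) : ℝ :=
  fderiv ℝ Q x (Pi.single i 1) * fderiv ℝ Q x (Pi.single j 1) -
    if i = j then (∑ k, (fderiv ℝ Q x (Pi.single k 1)) ^ 2) / 2 - F (Q x) else 0

lemma hasFDerivAt_stressTensor {F f : ℝ → ℝ} (hF : ∀ s, HasDerivAt F (f s) s)
    {Q : (Fin N → ℝ) → ℝ} (hQ : ContDiff ℝ 2 Q) (i j : Fin N) (x : Fin N → ℝ) :
    HasFDerivAt (stressTensor F Q i j)
      (fderiv ℝ Q x (Pi.single i 1) • fderiv ℝ (fun y => fderiv ℝ Q y (Pi.single j 1)) x +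
        fderiv ℝ Q x (Pi.single j 1) • fderiv ℝ (fun y => fderiv ℝ Q y (Pi.single i 1)) x -
        if i = j then
          ∑ k, fderiv ℝ Q x (Pi.single k 1) •
              fderiv ℝ (fun y => fderiv ℝ Q y (Pi.single k 1)) x - f (Q x) • fderiv ℝ Q x
        else 0) x := by
  have hu k : HasFDerivAt (fun y => fderiv ℝ Q y (Pi.single k 1))
      (fderiv ℝ (fun y => fderiv ℝ Q y (Pi.single k 1)) x) x :=
    (differentiable_fderiv_apply hQ _ x).hasFDerivAt
  have hFQ : HasFDerivAt (fun y => F (Q y)) (f (Q x) • fderiv ℝ Q x) x :=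
    (hF (Q x)).comp_hasFDerivAt x ((hQ.differentiable two_ne_zero) x).hasFDerivAt
  unfold stressTensor
  split_ifs with hij
  · subst hij
    have hsq := HasFDerivAt.fun_sum (u := Finset.univ) fun k _ => (hu k).pow 2
    refine (((hu i).fun_mul (hu i)).sub ((hsq.mul_const 2⁻¹).sub hFQ)).congr_of_eventuallyEq
      (Eventually.of_forall fun y => by simp [div_eq_mul_inv]) |>.congr_fderiv ?_
    ext v
    simp only [Nat.add_one_sub_one, pow_one, nsmul_eq_mul, Nat.cast_ofNat, sub_apply, add_apply,
      smul_apply, smul_eq_mul, sum_apply, sub_right_inj, sub_left_inj]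
    rw [Finset.mul_sum]
    exact Finset.sum_congr rfl fun k _ => by ring
  · simpa [add_comm] using ((hu i).fun_mul (hu j)).sub_const 0

theorem sum_fderiv_stressTensor_eq_zero {F f : ℝ → ℝ} (hF : ∀ s, HasDerivAt F (f s) s)
    {Q : (Fin N → ℝ) → ℝ} (hQ : ContDiff ℝ 2 Q)
    (heq : ∀ x, (∑ i, fderiv ℝ (fun y => fderiv ℝ Q y (Pi.single i 1)) x (Pi.single i 1))
      + f (Q x) = 0) (j : Fin N) (x : Fin N → ℝ) :
    ∑ i, fderiv ℝ (stressTensor F Q i j) x (Pi.single i 1) = 0 := by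
  set u := fun k => fderiv ℝ Q x (Pi.single k 1)
  set D := fun k l => fderiv ℝ (fun y => fderiv ℝ Q y (Pi.single k 1)) x (Pi.single l 1)
  have hpartial i : fderiv ℝ (stressTensor F Q i j) x (Pi.single i 1) =
      u i * D i j + u j * D i i - if i = j then ∑ k, u k * D k j - f (Q x) * u j else 0 := by
    rw [(hasFDerivAt_stressTensor hF hQ i j x).fderiv]
    split_ifs with hij
    · subst hij
      simp [u, D]
    · simp [u, D, fderiv_fderiv_apply_comm hQ x (Pi.single j 1)]
  simp only [hpartial, Finset.sum_sub_distrib, Finset.sum_add_distrib, Finset.sum_ite_eq',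
    Finset.mem_univ, if_true, ← Finset.mul_sum]
  linear_combination u j * heq x

lemma sum_fderiv_coord_mul {g : Fin N → (Fin N → ℝ) → ℝ} {x : Fin N → ℝ}
    (hg : ∀ i, DifferentiableAt ℝ (g i) x) (j : Fin N) :
    ∑ i, fderiv ℝ (fun y => y j * g i y) x (Pi.single i 1) =
      g j x + x j * ∑ i, fderiv ℝ (g i) x (Pi.single i 1) := by
  have hcoord := hasFDerivAt_apply (𝕜 := ℝ) j x
  simp only [fderiv_fun_mul hcoord.differentiableAt (hg _), hcoord.fderiv, add_apply, smul_apply,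
    smul_eq_mul, ContinuousLinearMap.proj_apply, Pi.single_apply, mul_ite, mul_one, mul_zero,
    Finset.sum_add_distrib, Finset.sum_ite_eq, Finset.mem_univ, if_true, Finset.mul_sum]
  ring

theorem sum_fderiv_coord_mul_stressTensor {F f : ℝ → ℝ} (hF : ∀ s, HasDerivAt F (f s) s)
    {Q : (Fin N → ℝ) → ℝ} (hQ : ContDiff ℝ 2 Q)
    (heq : ∀ x, (∑ i, fderiv ℝ (fun y => fderiv ℝ Q y (Pi.single i 1)) x (Pi.single i 1))
      + f (Q x) = 0) (j : Fin N) (x : Fin N → ℝ) :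
    ∑ i, fderiv ℝ (fun y => y j * stressTensor F Q i j y) x (Pi.single i 1) =
      stressTensor F Q j j x := by
  rw [sum_fderiv_coord_mul (fun i => (hasFDerivAt_stressTensor hF hQ i j x).differentiableAt),
    sum_fderiv_stressTensor_eq_zero hF hQ heq, mul_zero, add_zero]

lemma abs_stressTensor_le {F : ℝ → ℝ} {Q : (Fin N → ℝ) → ℝ} {x : Fin N → ℝ} {s t : ℝ}
    (hs : ∀ k, |fderiv ℝ Q x (Pi.single k 1)| ≤ s) (ht : |F (Q x)| ≤ t) (i j : Fin N) :
    |stressTensor F Q i j x| ≤ (N + 1) * s ^ 2 + t := by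
  have hs0 : 0 ≤ s := (abs_nonneg _).trans (hs i)
  have hsq k : (fderiv ℝ Q x (Pi.single k 1)) ^ 2 ≤ s ^ 2 :=
    sq_le_sq' (abs_le.1 (hs k)).1 (abs_le.1 (hs k)).2
  have hprod : |fderiv ℝ Q x (Pi.single i 1) * fderiv ℝ Q x (Pi.single j 1)| ≤ s ^ 2 := by
    rw [abs_mul, sq]; exact mul_le_mul (hs i) (hs j) (abs_nonneg _) hs0
  have hsum : |(∑ k, (fderiv ℝ Q x (Pi.single k 1)) ^ 2) / 2 - F (Q x)| ≤ N * s ^ 2 + t := by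
    have h1 : ∑ k, (fderiv ℝ Q x (Pi.single k 1)) ^ 2 ≤ N * s ^ 2 := by
      simpa using Finset.sum_le_sum fun k (_ : k ∈ Finset.univ) => hsq k
    have h2 : 0 ≤ ∑ k, (fderiv ℝ Q x (Pi.single k 1)) ^ 2 := by positivity
    rw [abs_le] at ht ⊢
    constructor <;> nlinarith [sq_nonneg s]
  unfold stressTensor
  split_ifs
  · exact (abs_sub _ _).trans (by linarith)
  · rw [sub_zero]; nlinarith [sq_nonneg s, abs_nonneg (F (Q x))]

lemma abs_coord_mul_stressTensor_le {Q : (Fin N → ℝ) → ℝ} {p C : ℝ} (hp : 1 ≤ p)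
    (hpN : (2 - N) * p ≤ 2 - 2 * N) {x : Fin N → ℝ} (hx : 1 ≤ ‖x‖)
    (hQx : |Q x| ≤ C * ‖x‖ ^ ((2 : ℝ) - N))
    (hdQx : ∀ k, |fderiv ℝ Q x (Pi.single k 1)| ≤ C * ‖x‖ ^ ((1 : ℝ) - N)) (i j : Fin N) :
    |x j * stressTensor (fun s => |s| ^ p / p) Q i j x| ≤
      ((N + 1) * C ^ 2 + C ^ p) * ‖x‖ ^ (3 - 2 * (N : ℝ)) := by
  set ρ := ‖x‖
  have hρ : 0 < ρ := by linarith
  have hC : 0 ≤ C :=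
    nonneg_of_mul_nonneg_left ((abs_nonneg _).trans hQx) (Real.rpow_pos_of_pos hρ _)
  have hF : |(fun s => |s| ^ p / p) (Q x)| ≤ C ^ p * ρ ^ (2 - 2 * (N : ℝ)) := by
    calc |(fun s => |s| ^ p / p) (Q x)| = |Q x| ^ p / p := by
          simp only [abs_div, abs_of_pos (by linarith : 0 < p),
            abs_of_nonneg (Real.rpow_nonneg (abs_nonneg _) _)]
      _ ≤ |Q x| ^ p := div_le_self (by positivity) hp
      _ ≤ (C * ρ ^ ((2 : ℝ) - N)) ^ p := Real.rpow_le_rpow (abs_nonneg _) hQx (by linarith)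
      _ = C ^ p * ρ ^ ((2 - N) * p) := by
          rw [Real.mul_rpow hC (by positivity), ← Real.rpow_mul hρ.le]
      _ ≤ C ^ p * ρ ^ (2 - 2 * (N : ℝ)) := by gcongr
  have hT := abs_stressTensor_le (F := fun s => |s| ^ p / p) hdQx hF i j
  have e1 : (C * ρ ^ ((1 : ℝ) - N)) ^ 2 = C ^ 2 * ρ ^ (2 - 2 * (N : ℝ)) := by
    rw [mul_pow, ← Real.rpow_mul_natCast hρ.le]; ring_nf
  have e2 : ρ * ρ ^ (2 - 2 * (N : ℝ)) = ρ ^ (3 - 2 * (N : ℝ)) := by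
    rw [mul_comm, ← Real.rpow_add_one hρ.ne']; ring_nf
  calc |x j * stressTensor (fun s => |s| ^ p / p) Q i j x|
      ≤ ρ * ((N + 1) * (C * ρ ^ ((1 : ℝ) - N)) ^ 2 + C ^ p * ρ ^ (2 - 2 * (N : ℝ))) := by
        rw [abs_mul]; exact mul_le_mul (norm_le_pi_norm x j) hT (abs_nonneg _) hρ.le
    _ = ((N + 1) * C ^ 2 + C ^ p) * ρ ^ (3 - 2 * (N : ℝ)) := by rw [e1, ← e2]; ring

end

section
variable {n : ℕ}

lemma abs_setIntegral_Icc_divergence_le {f : Fin (n + 1) → (Fin (n + 1) → ℝ) → ℝ}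
    (hf : ∀ i, Differentiable ℝ (f i))
    (hdiv : Integrable fun x => ∑ i, fderiv ℝ (f i) x (Pi.single i 1)) {R B : ℝ} (hR : 0 ≤ R)
    (hB : ∀ i x, R ≤ ‖x‖ → |f i x| ≤ B) :
    |∫ x in Icc (fun _ => -R) (fun _ => R), ∑ i, fderiv ℝ (f i) x (Pi.single i 1)|
      ≤ 2 * (n + 1) * (2 * R) ^ n * B := by
  have hle : (fun _ : Fin (n + 1) => -R) ≤ fun _ => R := fun _ => by linarith
  rw [integral_divergence_of_hasFDerivAt_off_countable' _ _ hle f (fun i x => fderiv ℝ (f i) x) ∅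
    countable_empty (fun i => (hf i).continuous.continuousOn)
    (fun x _ i => (hf i x).hasFDerivAt) hdiv.integrableOn]
  have hface (i : Fin (n + 1)) (c : ℝ) (hc : |c| = R) :
      |∫ y in Icc ((fun _ => -R) ∘ i.succAbove) ((fun _ => R) ∘ i.succAbove),
        f i (i.insertNth c y)| ≤ (2 * R) ^ n * B := by
    have hvol : volume.real (Icc ((fun _ => -R) ∘ i.succAbove) ((fun _ => R) ∘ i.succAbove)) =
        (2 * R) ^ n := by
      rw [measureReal_def,
        Real.volume_Icc_pi_toReal fun _ => by simp only [Function.comp_apply]; linarith]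
      simp only [Function.comp_apply, Finset.prod_const, Finset.card_univ, Fintype.card_fin]
      ring
    rw [← Real.norm_eq_abs, ← hvol, mul_comm]
    refine norm_setIntegral_le_of_norm_le_const isCompact_Icc.measure_lt_top fun y _ => ?_
    -- `‖·‖` is the sup norm, so the faces of the cube lie on the sphere of radius `R`.
    refine hB i _ ?_
    simpa [hc] using norm_le_pi_norm (i.insertNth c y : Fin (n + 1) → ℝ) i
  calc _ ≤ ∑ i : Fin (n + 1), ((2 * R) ^ n * B + (2 * R) ^ n * B) :=
        (Finset.abs_sum_le_sum_abs _ _).trans <| Finset.sum_le_sum fun i _ =>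
          (abs_sub _ _).trans <| add_le_add (hface i R (abs_of_nonneg hR))
            (hface i (-R) (by rw [abs_neg, abs_of_nonneg hR]))
    _ = 2 * (n + 1) * (2 * R) ^ n * B := by simp; ring

theorem integral_divergence_eq_zero_of_decay {a K : ℝ} (ha : (n : ℝ) < a)
    {f : Fin (n + 1) → (Fin (n + 1) → ℝ) → ℝ} (hf : ∀ i, Differentiable ℝ (f i))
    (hdiv : Integrable fun x => ∑ i, fderiv ℝ (f i) x (Pi.single i 1))
    (hdecay : ∀ i x, 1 ≤ ‖x‖ → |f i x| ≤ K * ‖x‖ ^ (-a)) :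
    ∫ x, ∑ i, fderiv ℝ (f i) x (Pi.single i 1) = 0 := by
  have hK : 0 ≤ K := by simpa using (abs_nonneg _).trans (hdecay 0 (fun _ => 1) (by simp))
  set box : ℝ → Set (Fin (n + 1) → ℝ) := fun R => Icc (fun _ => -R) (fun _ => R)
  have hcover : AECover volume atTop box :=
    { ae_eventually_mem := ae_of_all _ fun x => (eventually_ge_atTop ‖x‖).mono fun R hR =>
        ⟨fun i => neg_le_of_abs_le ((norm_le_pi_norm x i).trans hR),
          fun i => le_of_abs_le ((norm_le_pi_norm x i).trans hR)⟩
      measurableSet := fun _ => measurableSet_Icc }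
  have hbound : ∀ᶠ R in atTop, ‖∫ x in box R, ∑ i, fderiv ℝ (f i) x (Pi.single i 1)‖ ≤
      2 * (n + 1) * 2 ^ n * K * R ^ (-(a - n)) := by
    filter_upwards [eventually_ge_atTop 1] with R hR
    have hR0 : 0 < R := by linarith
    refine (abs_setIntegral_Icc_divergence_le (B := K * R ^ (-a)) hf hdiv hR0.le fun i x hx =>
      (hdecay i x (hR.trans hx)).trans ?_).trans (le_of_eq ?_)
    · exact mul_le_mul_of_nonneg_left (Real.rpow_le_rpow_of_nonpos hR0 hx (by linarith)) hK
    · rw [neg_sub, sub_eq_add_neg, Real.rpow_add hR0, Real.rpow_natCast, mul_pow]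
      ring
  have hzero := squeeze_zero_norm' hbound
    (by simpa using (tendsto_rpow_neg_atTop (sub_pos.2 ha)).const_mul (2 * (n + 1) * 2 ^ n * K))
  exact tendsto_nhds_unique (hcover.integral_tendsto_of_countably_generated hdiv) hzero

end

theorem integral_sq_fderiv_eq_of_stressTensor_decay {n : ℕ} {F f : ℝ → ℝ}
    (hF : ∀ s, HasDerivAt F (f s) s) {Q : (Fin (n + 1) → ℝ) → ℝ} (hQ : ContDiff ℝ 2 Q)
    (heq : ∀ x, (∑ i, fderiv ℝ (fun y => fderiv ℝ Q y (Pi.single i 1)) x (Pi.single i 1))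
      + f (Q x) = 0)
    (hsq : ∀ k, Integrable fun x => (fderiv ℝ Q x (Pi.single k 1)) ^ 2)
    {a K : ℝ} (ha : (n : ℝ) < a)
    (hdecay : ∀ i j x, 1 ≤ ‖x‖ → |x j * stressTensor F Q i j x| ≤ K * ‖x‖ ^ (-a))
    (j k : Fin (n + 1)) :
    ∫ x, (fderiv ℝ Q x (Pi.single j 1)) ^ 2 = ∫ x, (fderiv ℝ Q x (Pi.single k 1)) ^ 2 := by
  have hW l i : Differentiable ℝ fun y => y l * stressTensor F Q i l y := by
    have : Differentiable ℝ (stressTensor F Q i l) := fun x =>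
      (hasFDerivAt_stressTensor hF hQ i l x).differentiableAt
    fun_prop
  have hdivV x : ∑ i, fderiv ℝ (fun y => y j * stressTensor F Q i j y -
        y k * stressTensor F Q i k y) x (Pi.single i 1) =
      (fderiv ℝ Q x (Pi.single j 1)) ^ 2 - (fderiv ℝ Q x (Pi.single k 1)) ^ 2 := by
    have hsplit i : fderiv ℝ (fun y => y j * stressTensor F Q i j y -
          y k * stressTensor F Q i k y) x (Pi.single i 1) =
        fderiv ℝ (fun y => y j * stressTensor F Q i j y) x (Pi.single i 1) -
          fderiv ℝ (fun y => y k * stressTensor F Q i k y) x (Pi.single i 1) := by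
      rw [fderiv_fun_sub (hW j i x) (hW k i x), sub_apply]
    rw [Finset.sum_congr rfl fun i _ => hsplit i, Finset.sum_sub_distrib,
      sum_fderiv_coord_mul_stressTensor hF hQ heq, sum_fderiv_coord_mul_stressTensor hF hQ heq]
    simp [stressTensor, sq]
  have hzero := integral_divergence_eq_zero_of_decay (K := 2 * K)
    (f := fun i y => y j * stressTensor F Q i j y - y k * stressTensor F Q i k y) ha
    (fun i => (hW j i).sub (hW k i))
    (by simp only [hdivV]; exact (hsq j).sub (hsq k)) fun i x hx =>
      (abs_sub _ _).trans (by linarith [hdecay i j x hx, hdecay i k x hx])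
  simp only [hdivV] at hzero
  rwa [integral_sub (hsq j) (hsq k), sub_eq_zero] at hzero

theorem stmt_17_general (N : ℕ) (hN : 3 ≤ N)
    (Q : (Fin N → ℝ) → ℝ) (hQ : ContDiff ℝ 2 Q)
    (heq : ∀ x : Fin N → ℝ,
      (∑ j : Fin N, fderiv ℝ (fun y => fderiv ℝ Q y (Pi.single j 1)) x (Pi.single j 1))
        + |Q x| ^ ((4 : ℝ) / ((N : ℝ) - 2)) * Q x = 0)
    (hgrad : Integrable (fun x : Fin N → ℝ => ∑ j : Fin N, (fderiv ℝ Q x (Pi.single j 1)) ^ 2))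
    (hdecay : ∃ C : ℝ, ∀ x : Fin N → ℝ, 1 ≤ ‖x‖ →
      |Q x| ≤ C * ‖x‖ ^ ((2 : ℝ) - N) ∧
      (∀ j : Fin N, |fderiv ℝ Q x (Pi.single j 1)| ≤ C * ‖x‖ ^ ((1 : ℝ) - N)) ∧
      (∀ j k : Fin N,
        |fderiv ℝ (fun y => fderiv ℝ Q y (Pi.single k 1)) x (Pi.single j 1)|
          ≤ C * ‖x‖ ^ (-(N : ℝ)))) :
    ∀ j : Fin N,
      (∫ x : Fin N → ℝ, (fderiv ℝ Q x (Pi.single j 1)) ^ 2)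
        = (1 / (N : ℝ)) * ∫ x : Fin N → ℝ, ∑ k : Fin N, (fderiv ℝ Q x (Pi.single k 1)) ^ 2 := by
  obtain ⟨n, rfl⟩ : ∃ n, N = n + 1 := ⟨N - 1, by omega⟩
  obtain ⟨C, hC⟩ := hdecay
  have hN' : (3 : ℝ) ≤ (n + 1 : ℕ) := by exact_mod_cast hN
  set r : ℝ := 4 / (((n + 1 : ℕ) : ℝ) - 2)
  have hr : 0 < r := div_pos four_pos (by linarith)
  have hF s : HasDerivAt (fun s => |s| ^ (r + 2) / (r + 2)) (|s| ^ r * s) s := by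
    refine ((hasDerivAt_abs_rpow s (by linarith : 1 < r + 2)).div_const (r + 2)).congr_deriv ?_
    rw [add_sub_cancel_right]
    field_simp
  have hsq := integrable_sq_of_integrable_sum_sq (fun k =>
    ((hQ.continuous_fderiv two_ne_zero).clm_apply continuous_const).aestronglyMeasurable) hgrad
  have hcrit : (2 - ((n + 1 : ℕ) : ℝ)) * (r + 2) = -2 * ((n + 1 : ℕ) : ℝ) := by
    have : ((n + 1 : ℕ) : ℝ) - 2 ≠ 0 := by linarith
    simp only [r]
    field_simp
    ring
  have hequal := integral_sq_fderiv_eq_of_stressTensor_decay hF hQ heq hsq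
    (a := 2 * ((n + 1 : ℕ) : ℝ) - 3) (by push_cast at hN' ⊢; linarith) fun i j x hx => by
      rw [neg_sub]
      exact abs_coord_mul_stressTensor_le (by linarith) (by linarith) hx (hC x hx).1 (hC x hx).2.1 i j
  intro j
  rw [integral_finsetSum _ fun k _ => hsq k, Finset.sum_congr rfl fun k _ => (hequal j k).symm]
  simp only [Finset.sum_const, Finset.card_univ, Fintype.card_fin, nsmul_eq_mul]
  field_simp

theorem stmt_17 (N : ℕ) (hN : 3 ≤ N) (hN5 : N ≤ 5)
    (Q : (Fin N → ℝ) → ℝ) (hQ : ContDiff ℝ 2 Q)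
    (heq : ∀ x : Fin N → ℝ,
      (∑ j : Fin N, fderiv ℝ (fun y => fderiv ℝ Q y (Pi.single j 1)) x (Pi.single j 1))
        + |Q x| ^ ((4 : ℝ) / ((N : ℝ) - 2)) * Q x = 0)
    (hgrad : Integrable (fun x : Fin N → ℝ => ∑ j : Fin N, (fderiv ℝ Q x (Pi.single j 1)) ^ 2))
    (hdecay : ∃ C : ℝ, ∀ x : Fin N → ℝ, 1 ≤ ‖x‖ →
      |Q x| ≤ C * ‖x‖ ^ ((2 : ℝ) - N) ∧
      (∀ j : Fin N, |fderiv ℝ Q x (Pi.single j 1)| ≤ C * ‖x‖ ^ ((1 : ℝ) - N)) ∧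
      (∀ j k : Fin N,
        |fderiv ℝ (fun y => fderiv ℝ Q y (Pi.single k 1)) x (Pi.single j 1)|
          ≤ C * ‖x‖ ^ (-(N : ℝ)))) :
    ∀ j : Fin N,
      (∫ x : Fin N → ℝ, (fderiv ℝ Q x (Pi.single j 1)) ^ 2)
        = (1 / (N : ℝ)) * ∫ x : Fin N → ℝ, ∑ k : Fin N, (fderiv ℝ Q x (Pi.single k 1)) ^ 2 :=
  stmt_17_general N hN Q hQ heq hgrad hdecay
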